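/- arXiv:1305.5941 — 2 statements merged into one kernel-verified Lean document; each statement's English description precedes it below -/
import Mathlib

section
/- A bipartite state ρ_AB of dimension m×n is separable if and only if there exist positive integers d₁, d₂ and a state ρ_AA'BB' on (ℂ^m⊗ℂ^{d₁})⊗(ℂ^n⊗ℂ^{d₂}) that is classical-classical across the (AA')|(BB') cut and whose partial trace over the A' and B' factors equals ρ_AB; moreover, when ρ_AB is separable such a classical-classical extension exists with d₁ = d₂ = m²n² (so that ρ_AA'BB' has dimension m³n² × m²n³). -/
open scoped Kronecker ComplexOrder Matrix

noncomputable section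

/-- A quantum state (density matrix): positive semidefinite with trace 1. -/
def IsState {α : Type*} [Fintype α] (ρ : Matrix α α ℂ) : Prop :=
  ρ.PosSemidef ∧ ρ.trace = 1

/-- The rank-one matrix `ψ ψ*`. -/
def vecState {α : Type*} (ψ : α → ℂ) : Matrix α α ℂ :=
  fun i j => ψ i * star (ψ j)

/-- Kronecker product of two vectors. -/
def kronVec {α β : Type*} (a : α → ℂ) (b : β → ℂ) : α × β → ℂ :=
  fun p => a p.1 * b p.2

/-- Partial trace over the first tensor factor. -/
def ptrace1 {α β : Type*} [Fintype α] (M : Matrix (α × β) (α × β) ℂ) : Matrix β β ℂ :=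
  fun k k' => ∑ i, M (i, k) (i, k')

/-- Partial trace over the second tensor factor. -/
def ptrace2 {α β : Type*} [Fintype β] (M : Matrix (α × β) (α × β) ℂ) : Matrix α α ℂ :=
  fun i i' => ∑ k, M (i, k) (i', k)

/-- Partial trace over the third factor of a triple tensor product. -/
def ptrace3 {α β γ : Type*} [Fintype γ]
    (M : Matrix (α × β × γ) (α × β × γ) ℂ) : Matrix (α × β) (α × β) ℂ :=
  fun p q => ∑ t, M (p.1, (p.2, t)) (q.1, (q.2, t))

/-- Partial trace over the middle factor of a triple tensor product. -/
def ptraceMid {α β γ : Type*} [Fintype β]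
    (M : Matrix (α × β × γ) (α × β × γ) ℂ) : Matrix (α × γ) (α × γ) ℂ :=
  fun p q => ∑ k, M (p.1, (k, p.2)) (q.1, (k, q.2))

/-- Partial trace over the primed (A' and B') factors of a state on (A⊗A')⊗(B⊗B'). -/
def ptracePrimes {α α' β β' : Type*} [Fintype α'] [Fintype β']
    (M : Matrix ((α × α') × β × β') ((α × α') × β × β') ℂ) : Matrix (α × β) (α × β) ℂ :=
  fun p q => ∑ s, ∑ t, M ((p.1, s), (p.2, t)) ((q.1, s), (q.2, t))

/-- Partial trace over the unprimed (A and B) factors of a state on (A⊗A')⊗(B⊗B'). -/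
def ptraceUnprimed {α α' β β' : Type*} [Fintype α] [Fintype β]
    (M : Matrix ((α × α') × β × β') ((α × α') × β × β') ℂ) : Matrix (α' × β') (α' × β') ℂ :=
  fun p q => ∑ i, ∑ k, M ((i, p.1), (k, p.2)) ((i, q.1), (k, q.2))

/-- Von Neumann entropy: `S(ρ) = -∑ λᵢ log λᵢ` where λᵢ are the eigenvalues. -/
def vnEntropy {α : Type*} [Fintype α] [DecidableEq α] (ρ : Matrix α α ℂ) : ℝ :=
  if h : ρ.IsHermitian then ∑ i, Real.negMulLog (h.eigenvalues i) else 0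

/-- Entanglement of formation. -/
def EoF {α β : Type*} [Fintype α] [Fintype β] [DecidableEq α]
    (ρ : Matrix (α × β) (α × β) ℂ) : ℝ :=
  sInf {x : ℝ | ∃ (k : ℕ) (p : Fin k → ℝ) (ψ : Fin k → α × β → ℂ),
    (∀ i, 0 ≤ p i) ∧ (∀ i, star (ψ i) ⬝ᵥ ψ i = 1) ∧
    (∑ i, (p i : ℂ) • vecState (ψ i)) = ρ ∧
    x = ∑ i, p i * vnEntropy (ptrace2 (vecState (ψ i)))}

/-- Separability of a bipartite state. -/
def IsSepState {α β : Type*} [Fintype α] [Fintype β]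
    (ρ : Matrix (α × β) (α × β) ℂ) : Prop :=
  ∃ (k : ℕ) (p : Fin k → ℝ) (a : Fin k → α → ℂ) (b : Fin k → β → ℂ),
    (∀ i, 0 ≤ p i) ∧ (∑ i, p i) = 1 ∧
    (∀ i, star (a i) ⬝ᵥ a i = 1) ∧ (∀ i, star (b i) ⬝ᵥ b i = 1) ∧
    ρ = ∑ i, (p i : ℂ) • (vecState (a i) ⊗ₖ vecState (b i))

/-- Classical-classical bipartite states. -/
def IsCC {α β : Type*} [Fintype α] [Fintype β] [DecidableEq α] [DecidableEq β]
    (ρ : Matrix (α × β) (α × β) ℂ) : Prop :=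
  ∃ (a : α → α → ℂ) (b : β → β → ℂ) (p : α → β → ℝ),
    (∀ i j, star (a i) ⬝ᵥ a j = if i = j then 1 else 0) ∧
    (∀ i j, star (b i) ⬝ᵥ b j = if i = j then 1 else 0) ∧
    (∀ i j, 0 ≤ p i j) ∧ (∑ i, ∑ j, p i j) = 1 ∧
    ρ = ∑ i, ∑ j, (p i j : ℂ) • (vecState (a i) ⊗ₖ vecState (b j))

/-- Quantum-classical bipartite states (classical on the second factor). -/
def IsQC {α β : Type*} [Fintype α] [Fintype β] [DecidableEq β]
    (ρ : Matrix (α × β) (α × β) ℂ) : Prop :=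
  ∃ (b : β → β → ℂ) (σ : β → Matrix α α ℂ) (p : β → ℝ),
    (∀ i j, star (b i) ⬝ᵥ b j = if i = j then 1 else 0) ∧
    (∀ i, IsState (σ i)) ∧ (∀ i, 0 ≤ p i) ∧ (∑ i, p i) = 1 ∧
    ρ = ∑ i, (p i : ℂ) • (σ i ⊗ₖ vecState (b i))

/-- A POVM: finitely many positive semidefinite operators summing to the identity. -/
def IsPOVM {γ : Type*} [Fintype γ] [DecidableEq γ] {k : ℕ}
    (P : Fin k → Matrix γ γ ℂ) : Prop :=
  (∀ i, (P i).PosSemidef) ∧ (∑ i, P i) = 1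

/-- A von Neumann measurement: pairwise-orthogonal orthogonal projections summing to I. -/
def IsVNMeas {γ : Type*} [Fintype γ] [DecidableEq γ] {k : ℕ}
    (P : Fin k → Matrix γ γ ℂ) : Prop :=
  (∀ i, (P i).IsHermitian) ∧ (∀ i, P i * P i = P i) ∧
  (∀ i j, i ≠ j → P i * P j = 0) ∧ (∑ i, P i) = 1

/-- The term `pᵢ S(ρ_A^i)` for a measurement operator `P` on the second subsystem,
with the convention that the term vanishes when `pᵢ = 0`. -/
def measTerm {α β : Type*} [Fintype α] [Fintype β] [DecidableEq α] [DecidableEq β]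
    (ρ : Matrix (α × β) (α × β) ℂ) (P : Matrix β β ℂ) : ℝ :=
  if _h : (Matrix.trace (ρ * ((1 : Matrix α α ℂ) ⊗ₖ P))).re = 0 then 0
  else (Matrix.trace (ρ * ((1 : Matrix α α ℂ) ⊗ₖ P))).re *
    vnEntropy ((((Matrix.trace (ρ * ((1 : Matrix α α ℂ) ⊗ₖ P))).re : ℂ))⁻¹ •
      ptrace2 (ρ * ((1 : Matrix α α ℂ) ⊗ₖ P)))

/-- Quantum discord with POVM measurements on the second subsystem. -/
def discordP {α β : Type*} [Fintype α] [Fintype β] [DecidableEq α] [DecidableEq β]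
    (ρ : Matrix (α × β) (α × β) ℂ) : ℝ :=
  vnEntropy (ptrace1 ρ) - vnEntropy ρ +
    sInf {x : ℝ | ∃ (k : ℕ) (P : Fin k → Matrix β β ℂ),
      IsPOVM P ∧ x = ∑ i, measTerm ρ (P i)}

/-- Quantum discord with von Neumann measurements on the second subsystem. -/
def discordN {α β : Type*} [Fintype α] [Fintype β] [DecidableEq α] [DecidableEq β]
    (ρ : Matrix (α × β) (α × β) ℂ) : ℝ :=
  vnEntropy (ptrace1 ρ) - vnEntropy ρ +
    sInf {x : ℝ | ∃ (k : ℕ) (P : Fin k → Matrix β β ℂ),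
      IsVNMeas P ∧ x = ∑ i, measTerm ρ (P i)}

/-- The trace norm `‖X‖₁ = tr √(X* X)`. -/
def traceNorm {α : Type*} [Fintype α] [DecidableEq α] (X : Matrix α α ℂ) : ℝ :=
  (((Matrix.posSemidef_conjTranspose_mul_self X).1.eigenvectorUnitary : Matrix α α ℂ) *
    Matrix.diagonal (fun i => ((Real.sqrt ((Matrix.posSemidef_conjTranspose_mul_self X).1.eigenvalues i) : ℝ) : ℂ)) *
    (star (Matrix.posSemidef_conjTranspose_mul_self X).1.eigenvectorUnitary : Matrix α α ℂ)).trace.re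

/-- The Frobenius norm `‖X‖₂ = √(tr (X* X))`. -/
def frobNorm {α β : Type*} [Fintype α] [Fintype β] (X : Matrix α β ℂ) : ℝ :=
  Real.sqrt (Matrix.trace (Xᴴ * X)).re

/-- Matrix logarithm taken on the support (eigenvalue 0 is sent to 0). -/
def matLog {α : Type*} [Fintype α] [DecidableEq α] (A : Matrix α α ℂ) : Matrix α α ℂ :=
  if h : A.IsHermitian then
    (Matrix.IsHermitian.eigenvectorUnitary h : Matrix α α ℂ) *
      Matrix.diagonal (fun i => if h.eigenvalues i = 0 then 0
        else (Real.log (h.eigenvalues i) : ℂ)) *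
      (star (Matrix.IsHermitian.eigenvectorUnitary h) : Matrix α α ℂ)
  else 0

end

/-!
Separable states are the convex hull of the pure product states `(a a*) ⊗ (b b*)`. These are
Hermitian of trace one; affinely independent trace-one Hermitian `N × N` matrices are linearly
independent and embed, via `X ↦ re X + im X`, into the `N²`-dimensional space of real
matrices, so by Carathéodory
`ρ = ∑ₛ pₛ (aₛ aₛ*) ⊗ (bₛ bₛ*)` with at most `(m n)²` terms. The vectors `aₛ ⊗ eₛ` are then
orthonormal thanks to the flag `eₛ`, so they extend to an orthonormal basis of `ℂ^m ⊗ ℂ^d`, and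
likewise for `bₛ ⊗ eₛ`; in these bases `∑ₛ pₛ (aₛ⊗eₛ)(aₛ⊗eₛ)* ⊗ (bₛ⊗eₛ)(bₛ⊗eₛ)*` is
classical-classical, and tracing out the flags returns `ρ`. Conversely, a classical-classical
state is separable, and tracing out local factors preserves separability.
-/

open Matrix

lemma Function.extend_apply_of_forall {ι κ γ : Type*} {P : γ → Prop} (f : ι → κ) {g : ι → γ}
    {g' : κ → γ} (hg : ∀ i, P (g i)) (hg' : ∀ s, P (g' s)) (s : κ) :
    P (Function.extend f g g' s) := by
  obtain ⟨i, hi⟩ | ⟨t, -, ht⟩ := Set.range_extend_subset f g g' ⟨s, rfl⟩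
  · exact hi ▸ hg i
  · exact ht ▸ hg' t

section VecState

variable {α β : Type*}

lemma posSemidef_vecState [Fintype α] (ψ : α → ℂ) : (vecState ψ).PosSemidef :=
  posSemidef_vecMulVec_self_star ψ

lemma trace_vecState [Fintype α] (ψ : α → ℂ) : (vecState ψ).trace = star ψ ⬝ᵥ ψ := by
  simp [Matrix.trace, vecState, dotProduct, mul_comm]

lemma vecState_smul (c : ℂ) (ψ : α → ℂ) : vecState (c • ψ) = (c * star c) • vecState ψ := by
  ext i j
  simp only [vecState, Pi.smul_apply, smul_eq_mul, star_mul', Matrix.smul_apply]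
  ring

lemma vecState_kronVec (a : α → ℂ) (b : β → ℂ) :
    vecState (kronVec a b) = vecState a ⊗ₖ vecState b := by
  ext ⟨i, k⟩ ⟨i', k'⟩
  simp only [vecState, kronVec, kroneckerMap_apply, star_mul']
  ring

lemma star_kronVec_dotProduct [Fintype α] [Fintype β] (a c : α → ℂ) (b d : β → ℂ) :
    star (kronVec a b) ⬝ᵥ kronVec c d = (star a ⬝ᵥ c) * (star b ⬝ᵥ d) := by
  simp only [dotProduct, kronVec, Pi.star_apply, Fintype.sum_prod_type, star_mul',
    Finset.sum_mul_sum]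
  exact Finset.sum_congr rfl fun i _ => Finset.sum_congr rfl fun j _ => by ring

lemma exists_star_dotProduct_self_eq_one [Fintype α] [Nonempty α] :
    ∃ a : α → ℂ, star a ⬝ᵥ a = 1 := by
  classical
  obtain ⟨i⟩ := ‹Nonempty α›
  exact ⟨Pi.single i 1, by simp⟩

lemma exists_unit_vecState_eq_smul [Fintype α] [Nonempty α] (u : α → ℂ) :
    ∃ (r : ℝ) (a : α → ℂ), 0 ≤ r ∧ star a ⬝ᵥ a = 1 ∧ vecState u = (r : ℂ) • vecState a := by
  by_cases hu : u = 0
  · obtain ⟨a, ha⟩ := exists_star_dotProduct_self_eq_one (α := α)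
    refine ⟨0, a, le_rfl, ha, ?_⟩
    ext j k
    simp [hu, vecState]
  · set r : ℝ := ∑ i, Complex.normSq (u i)
    have hr : star u ⬝ᵥ u = (r : ℂ) := by
      simp [r, dotProduct, Complex.normSq_eq_conj_mul_self]
    have hr0 : 0 < r := by
      obtain ⟨i, hi⟩ := Function.ne_iff.mp hu
      exact Finset.sum_pos' (fun j _ => Complex.normSq_nonneg _)
        ⟨i, Finset.mem_univ _, Complex.normSq_pos.mpr hi⟩
    set c : ℂ := (((Real.sqrt r)⁻¹ : ℝ) : ℂ)
    have hc : c * star c = ((r⁻¹ : ℝ) : ℂ) := by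
      simp [c, ← Complex.ofReal_mul, ← mul_inv, Real.mul_self_sqrt hr0.le]
    refine ⟨r, c • u, hr0.le, ?_, ?_⟩
    · rw [star_smul, smul_dotProduct, dotProduct_smul, hr, smul_smul, smul_eq_mul,
        mul_comm (star c), hc, ← Complex.ofReal_mul, inv_mul_cancel₀ hr0.ne', Complex.ofReal_one]
    · rw [vecState_smul, hc, smul_smul, ← Complex.ofReal_mul, mul_inv_cancel₀ hr0.ne',
        Complex.ofReal_one, one_smul]

end VecState

section PartialTrace

variable {α α' β β' : Type*} [Fintype α'] [Fintype β']

lemma ptracePrimes_sum {ι : Type*} (s : Finset ι)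
    (M : ι → Matrix ((α × α') × β × β') ((α × α') × β × β') ℂ) :
    ptracePrimes (∑ i ∈ s, M i) = ∑ i ∈ s, ptracePrimes (M i) := by
  ext p q
  simp only [ptracePrimes, Matrix.sum_apply]
  conv_rhs => rw [Finset.sum_comm]
  exact Finset.sum_congr rfl fun _ _ => Finset.sum_comm

lemma ptracePrimes_smul (c : ℂ) (M : Matrix ((α × α') × β × β') ((α × α') × β × β') ℂ) :
    ptracePrimes (c • M) = c • ptracePrimes M := by
  ext p q
  simp only [ptracePrimes, Matrix.smul_apply, smul_eq_mul, Finset.mul_sum]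

lemma trace_ptracePrimes [Fintype α] [Fintype β]
    (M : Matrix ((α × α') × β × β') ((α × α') × β × β') ℂ) :
    (ptracePrimes M).trace = M.trace := by
  simp only [Matrix.trace, Matrix.diag, ptracePrimes, Fintype.sum_prod_type]
  exact Finset.sum_congr rfl fun _ _ => Finset.sum_comm

lemma ptracePrimes_kronecker_vecState (a : α × α' → ℂ) (b : β × β' → ℂ) :
    ptracePrimes (vecState a ⊗ₖ vecState b) =
      ∑ s, ∑ t, vecState (fun i => a (i, s)) ⊗ₖ vecState (fun k => b (k, t)) := by
  ext p q
  simp [ptracePrimes, vecState, Matrix.sum_apply]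

lemma ptracePrimes_kronecker_vecState_kronVec (u : α → ℂ) (e : α' → ℂ) (v : β → ℂ) (f : β' → ℂ)
    (he : star e ⬝ᵥ e = 1) (hf : star f ⬝ᵥ f = 1) :
    ptracePrimes (vecState (kronVec u e) ⊗ₖ vecState (kronVec v f)) =
      vecState u ⊗ₖ vecState v := by
  have he' : ∑ s, e s * star (e s) = 1 := by simpa [dotProduct, mul_comm] using he
  have hf' : ∑ t, f t * star (f t) = 1 := by simpa [dotProduct, mul_comm] using hf
  ext p q
  simp only [ptracePrimes, vecState, kronVec, kroneckerMap_apply, star_mul']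
  calc _ = (∑ s, e s * star (e s)) * (∑ t, f t * star (f t)) *
        (u p.1 * star (u q.1) * (v p.2 * star (v q.2))) := by
        simp only [Finset.sum_mul, Finset.mul_sum]
        rw [Finset.sum_comm]
        exact Finset.sum_congr rfl fun _ _ => Finset.sum_congr rfl fun _ _ => by ring
    _ = _ := by rw [he', hf', one_mul, one_mul]

end PartialTrace

section Decomposition

variable {α β : Type*} [Fintype α] [Fintype β]

lemma nonempty_of_trace_eq_one {M : Matrix α α ℂ} (h : M.trace = 1) : Nonempty α := by
  by_contra hα
  rw [not_nonempty_iff] at hα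
  simp [Matrix.trace] at h

lemma nonempty_and_nonempty_of_trace_eq_one {ρ : Matrix (α × β) (α × β) ℂ} (h : ρ.trace = 1) :
    Nonempty α ∧ Nonempty β :=
  nonempty_prod.mp (nonempty_of_trace_eq_one h)

lemma trace_sum_smul_kronecker_vecState {ι : Type*} [Fintype ι] (p : ι → ℂ) (a : ι → α → ℂ)
    (b : ι → β → ℂ) (ha : ∀ i, star (a i) ⬝ᵥ a i = 1) (hb : ∀ i, star (b i) ⬝ᵥ b i = 1) :
    (∑ i, p i • (vecState (a i) ⊗ₖ vecState (b i))).trace = ∑ i, p i := by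
  simp [Matrix.trace_sum, trace_kronecker, trace_vecState, ha, hb]

def HasSepDecomp (ι : Type*) [Fintype ι] (ρ : Matrix (α × β) (α × β) ℂ) : Prop :=
  ∃ (p : ι → ℝ) (a : ι → α → ℂ) (b : ι → β → ℂ),
    (∀ i, 0 ≤ p i) ∧ ∑ i, p i = 1 ∧
    (∀ i, star (a i) ⬝ᵥ a i = 1) ∧ (∀ i, star (b i) ⬝ᵥ b i = 1) ∧
    ρ = ∑ i, (p i : ℂ) • (vecState (a i) ⊗ₖ vecState (b i))

lemma isSepState_iff_exists_hasSepDecomp {ρ : Matrix (α × β) (α × β) ℂ} :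
    IsSepState ρ ↔ ∃ k, HasSepDecomp (Fin k) ρ := Iff.rfl

namespace HasSepDecomp

variable {ι κ : Type*} [Fintype ι] [Fintype κ] {ρ : Matrix (α × β) (α × β) ℂ}

lemma isState (h : HasSepDecomp ι ρ) : IsState ρ := by
  obtain ⟨p, a, b, hp, hp1, ha, hb, rfl⟩ := h
  refine ⟨posSemidef_sum _ fun i _ => ?_, ?_⟩
  · rw [← vecState_kronVec]
    exact (posSemidef_vecState _).smul (Complex.zero_le_real.mpr (hp i))
  · rw [trace_sum_smul_kronecker_vecState _ _ _ ha hb, ← Complex.ofReal_sum, hp1,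
      Complex.ofReal_one]

lemma isSepState (h : HasSepDecomp ι ρ) : IsSepState ρ := by
  obtain ⟨p, a, b, hp, hp1, ha, hb, rfl⟩ := h
  let e := (Fintype.equivFin ι).symm
  exact ⟨Fintype.card ι, p ∘ e, a ∘ e, b ∘ e, fun i => hp _, (e.sum_comp p).trans hp1,
    fun i => ha _, fun i => hb _, (e.sum_comp _).symm⟩

lemma of_embedding [Nonempty α] [Nonempty β] (h : HasSepDecomp ι ρ) (e : ι ↪ κ) :
    HasSepDecomp κ ρ := by
  obtain ⟨p, a, b, hp, hp1, ha, hb, rfl⟩ := h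
  obtain ⟨a₀, ha₀⟩ := exists_star_dotProduct_self_eq_one (α := α)
  obtain ⟨b₀, hb₀⟩ := exists_star_dotProduct_self_eq_one (α := β)
  have hout : ∀ s ∉ Set.range e, Function.extend e p 0 s = 0 := fun s hs =>
    Function.extend_apply' _ _ _ (by simpa using hs)
  refine ⟨Function.extend e p 0, Function.extend e a (fun _ => a₀),
    Function.extend e b (fun _ => b₀),
    Function.extend_apply_of_forall (P := (0 ≤ ·)) e hp fun _ => le_rfl, ?_,
    Function.extend_apply_of_forall (P := fun v => star v ⬝ᵥ v = 1) e ha fun _ => ha₀,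
    Function.extend_apply_of_forall (P := fun v => star v ⬝ᵥ v = 1) e hb fun _ => hb₀, ?_⟩
  · rw [← hp1]
    exact (Fintype.sum_of_injective e e.injective _ _ hout
      fun i => (e.injective.extend_apply _ _ _).symm).symm
  · exact Fintype.sum_of_injective e e.injective _ _ (fun s hs => by simp [hout s hs])
      fun i => by simp only [e.injective.extend_apply]

end HasSepDecomp

end Decomposition

section Separable

variable {α β : Type*} [Fintype α] [Fintype β]

lemma IsSepState.isState {ρ : Matrix (α × β) (α × β) ℂ} (h : IsSepState ρ) : IsState ρ := by
  obtain ⟨k, h⟩ := isSepState_iff_exists_hasSepDecomp.mp h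
  exact h.isState

lemma IsCC.hasSepDecomp [DecidableEq α] [DecidableEq β] {ρ : Matrix (α × β) (α × β) ℂ}
    (h : IsCC ρ) : HasSepDecomp (α × β) ρ := by
  obtain ⟨a, b, p, ha, hb, hp, hp1, rfl⟩ := h
  refine ⟨fun x => p x.1 x.2, fun x => a x.1, fun x => b x.2, fun x => hp _ _,
    by rwa [Fintype.sum_prod_type], fun x => by simpa using ha x.1 x.1,
    fun x => by simpa using hb x.2 x.2, by rw [Fintype.sum_prod_type]⟩

lemma isSepState_of_eq_sum {ι : Type*} [Fintype ι] {ρ : Matrix (α × β) (α × β) ℂ}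
    (c : ι → ℝ) (hc : ∀ i, 0 ≤ c i) (u : ι → α → ℂ) (v : ι → β → ℂ)
    (hρ : ρ = ∑ i, (c i : ℂ) • (vecState (u i) ⊗ₖ vecState (v i))) (htr : ρ.trace = 1) :
    IsSepState ρ := by
  obtain ⟨_, _⟩ := nonempty_and_nonempty_of_trace_eq_one htr
  choose r a hr ha hua using fun i => exists_unit_vecState_eq_smul (u i)
  choose s b hs hb hvb using fun i => exists_unit_vecState_eq_smul (v i)
  have hρ' : ρ = ∑ i, ((c i * r i * s i : ℝ) : ℂ) • (vecState (a i) ⊗ₖ vecState (b i)) := by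
    rw [hρ]
    refine Finset.sum_congr rfl fun i _ => ?_
    rw [hua, hvb, smul_kronecker, kronecker_smul, smul_smul, smul_smul]
    push_cast
    ring_nf
  refine HasSepDecomp.isSepState
    ⟨_, a, b, fun i => mul_nonneg (mul_nonneg (hc i) (hr i)) (hs i), ?_, ha, hb, hρ'⟩
  rw [hρ', trace_sum_smul_kronecker_vecState _ _ _ ha hb] at htr
  exact_mod_cast htr

lemma isSepState_ptracePrimes {α' β' : Type*} [Fintype α'] [Fintype β']
    {ρ : Matrix ((α × α') × β × β') ((α × α') × β × β') ℂ} (h : IsSepState ρ) :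
    IsSepState (ptracePrimes ρ) := by
  have htr := h.isState.2
  obtain ⟨k, p, a, b, hp, -, -, -, hρ⟩ := h
  refine isSepState_of_eq_sum (ι := Fin k × α' × β') (fun x => p x.1) (fun x => hp x.1)
    (fun x i => a x.1 (i, x.2.1)) (fun x j => b x.1 (j, x.2.2)) ?_ ?_
  · simp only [hρ, ptracePrimes_sum, ptracePrimes_smul, ptracePrimes_kronecker_vecState,
      Finset.smul_sum, Fintype.sum_prod_type]
  · rwa [trace_ptracePrimes]

end Separable

section HermitianDimension

variable {n : Type*}

def reAddIm : Matrix n n ℂ →ₗ[ℝ] Matrix n n ℝ :=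
  Complex.reLm.mapMatrix + Complex.imLm.mapMatrix

-- Injective on Hermitian matrices: there `re X` is symmetric and `im X` antisymmetric.
lemma Matrix.IsHermitian.eq_zero_of_reAddIm_eq_zero {X : Matrix n n ℂ} (hX : X.IsHermitian)
    (h : reAddIm X = 0) : X = 0 := by
  ext i j
  have hij := congr_fun₂ h i j
  have hji := congr_fun₂ h j i
  simp only [reAddIm, LinearMap.add_apply, LinearMap.mapMatrix_apply, Matrix.add_apply,
    Matrix.map_apply, Complex.reLm_coe, Complex.imLm_coe, Matrix.zero_apply] at hij hji
  rw [← hX.apply j i, Complex.star_def, Complex.conj_re, Complex.conj_im] at hji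
  apply Complex.ext <;> simp only [Matrix.zero_apply, Complex.zero_re, Complex.zero_im] <;> linarith

lemma AffineIndependent.card_le_of_isHermitian [Fintype n] {ι : Type*} [Fintype ι]
    {z : ι → Matrix n n ℂ} (hz : AffineIndependent ℝ z) (hH : ∀ i, (z i).IsHermitian)
    (htr : ∀ i, (z i).trace = 1) :
    Fintype.card ι ≤ Fintype.card n ^ 2 := by
  -- the hyperplane `trace = 1` misses `0`, so affine independence gives linear independence
  have hli : LinearIndependent ℝ (reAddIm ∘ z) := by
    rw [Fintype.linearIndependent_iff]
    intro g hg
    have hX : (∑ i, g i • z i).IsHermitian :=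
      isSelfAdjoint_sum _ fun i _ => (hH i).smul (IsSelfAdjoint.all (g i))
    have h0 : ∑ i, g i • z i = 0 :=
      hX.eq_zero_of_reAddIm_eq_zero (by simpa [map_sum] using hg)
    have hg0 : ∑ i, g i = 0 := by
      simpa [Matrix.trace_sum, htr] using congrArg (fun X => (Matrix.trace X).re) h0
    exact fun i => hz.eq_zero_of_sum_eq_zero hg0 h0 i (Finset.mem_univ _)
  simpa [sq, Module.finrank_matrix] using hli.fintype_card_le_finrank

end HermitianDimension

section Caratheodory

variable {α β : Type*} [Fintype α] [Fintype β]

def pureProductStates (α β : Type*) [Fintype α] [Fintype β] : Set (Matrix (α × β) (α × β) ℂ) :=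
  {X | ∃ a b, star a ⬝ᵥ a = 1 ∧ star b ⬝ᵥ b = 1 ∧ X = vecState a ⊗ₖ vecState b}

lemma HasSepDecomp.mem_convexHull {ι : Type*} [Fintype ι] {ρ : Matrix (α × β) (α × β) ℂ}
    (h : HasSepDecomp ι ρ) : ρ ∈ convexHull ℝ (pureProductStates α β) := by
  obtain ⟨p, a, b, hp, hp1, ha, hb, rfl⟩ := h
  simp only [Complex.coe_smul]
  exact (convex_convexHull ℝ _).sum_mem (fun i _ => hp i) hp1
    fun i _ => subset_convexHull ℝ _ ⟨a i, b i, ha i, hb i, rfl⟩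

lemma IsSepState.hasSepDecomp_of_card_le {ρ : Matrix (α × β) (α × β) ℂ} (h : IsSepState ρ)
    {κ : Type*} [Fintype κ] (hκ : (Fintype.card α * Fintype.card β) ^ 2 ≤ Fintype.card κ) :
    HasSepDecomp κ ρ := by
  obtain ⟨_, _⟩ := nonempty_and_nonempty_of_trace_eq_one h.isState.2
  obtain ⟨k, hk⟩ := isSepState_iff_exists_hasSepDecomp.mp h
  obtain ⟨ι, _, z, w, hzS, hz, hw, hw1, rfl⟩ :=
    eq_pos_convex_span_of_mem_convexHull hk.mem_convexHull
  have hzS' : ∀ i, ∃ a b, star a ⬝ᵥ a = 1 ∧ star b ⬝ᵥ b = 1 ∧ z i = vecState a ⊗ₖ vecState b :=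
    fun i => hzS ⟨i, rfl⟩
  choose a b ha hb hab using hzS'
  have hcard : Fintype.card ι ≤ Fintype.card (α × β) ^ 2 := by
    refine hz.card_le_of_isHermitian (fun i => ?_) fun i => ?_
    · rw [hab, ← vecState_kronVec]
      exact (posSemidef_vecState _).isHermitian
    · rw [hab, trace_kronecker, trace_vecState, trace_vecState, ha, hb, one_mul]
  rw [Fintype.card_prod] at hcard
  have hdecomp : HasSepDecomp ι (∑ i, w i • z i) :=
    ⟨w, a, b, fun i => (hw i).le, hw1, ha, hb, by simp [hab, Complex.coe_smul]⟩
  exact hdecomp.of_embedding (Function.Embedding.nonempty_of_card_le (hcard.trans hκ)).some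

end Caratheodory

section ClassicalExtension

variable {α β : Type*} [Fintype α] [Fintype β] [DecidableEq α] [DecidableEq β]

lemma exists_orthonormal_extension {ι : Type*} [Fintype ι] [DecidableEq ι] (S : Set ι)
    (v : ι → ι → ℂ) (hv : ∀ i ∈ S, ∀ j ∈ S, star (v i) ⬝ᵥ v j = if i = j then 1 else 0) :
    ∃ c : ι → ι → ℂ, (∀ i j, star (c i) ⬝ᵥ c j = if i = j then 1 else 0) ∧
      ∀ i ∈ S, c i = v i := by
  have hS : Orthonormal ℂ (S.domRestrict fun i => WithLp.toLp 2 (v i)) := by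
    rw [orthonormal_iff_ite]
    rintro ⟨i, hi⟩ ⟨j, hj⟩
    rw [Set.domRestrict_apply, Set.domRestrict_apply, EuclideanSpace.inner_toLp_toLp,
      dotProduct_comm, hv i hi j hj]
    simp only [Subtype.mk.injEq]
  obtain ⟨c, hc⟩ := hS.exists_orthonormalBasis_extension_of_card_eq (by simp)
  refine ⟨fun i => (c i).ofLp, fun i j => ?_, fun i hi => by simp [hc i hi]⟩
  rw [dotProduct_comm, ← EuclideanSpace.inner_eq_star_dotProduct]
  exact orthonormal_iff_ite.mp c.orthonormal i j

lemma isCC_sum_smul_kronecker {κ : Type*} [Fintype κ] (a : α → α → ℂ) (b : β → β → ℂ)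
    (ha : ∀ i j, star (a i) ⬝ᵥ a j = if i = j then 1 else 0)
    (hb : ∀ i j, star (b i) ⬝ᵥ b j = if i = j then 1 else 0)
    (f : κ → α) (g : κ → β) (p : κ → ℝ) (hp : ∀ s, 0 ≤ p s) (hp1 : ∑ s, p s = 1) :
    IsCC (∑ s, (p s : ℂ) • (vecState (a (f s)) ⊗ₖ vecState (b (g s)))) := by
  refine ⟨a, b, fun i j => ∑ s, if f s = i ∧ g s = j then p s else 0, ha, hb,
    fun i j => Finset.sum_nonneg fun s _ => by split_ifs <;> simp [hp s], ?_, ?_⟩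
  · rw [← hp1, Finset.sum_congr rfl fun i _ => Finset.sum_comm, Finset.sum_comm]
    simp [ite_and]
  · simp only [Complex.ofReal_sum, Finset.sum_smul]
    rw [Finset.sum_congr rfl fun i _ => Finset.sum_comm, Finset.sum_comm]
    simp [ite_and]

lemma exists_orthonormal_kronVec_single {γ δ : Type*} [Fintype γ] [DecidableEq γ] [Fintype δ]
    [DecidableEq δ] (x₀ : γ) (C : δ → γ → ℂ) (hC : ∀ s, star (C s) ⬝ᵥ C s = 1) :
    ∃ c : γ × δ → γ × δ → ℂ, (∀ I J, star (c I) ⬝ᵥ c J = if I = J then 1 else 0) ∧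
      ∀ s, c (x₀, s) = kronVec (C s) (Pi.single s 1) := by
  obtain ⟨c, hc, hcS⟩ := exists_orthonormal_extension {I | I.1 = x₀}
    (fun I => kronVec (C I.2) (Pi.single I.2 1)) (by
      rintro ⟨x, s⟩ rfl ⟨y, t⟩ rfl
      rw [star_kronVec_dotProduct]
      by_cases hst : s = t
      · subst hst
        simp [hC]
      · simp [hst])
  exact ⟨c, hc, fun s => hcS (x₀, s) rfl⟩

lemma HasSepDecomp.exists_isCC_ptracePrimes_eq [Nonempty α] [Nonempty β] {δ : Type*}
    [Fintype δ] [DecidableEq δ] {ρ : Matrix (α × β) (α × β) ℂ} (h : HasSepDecomp δ ρ) :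
    ∃ ρext : Matrix ((α × δ) × β × δ) ((α × δ) × β × δ) ℂ, IsCC ρext ∧ ptracePrimes ρext = ρ := by
  obtain ⟨p, A, B, hp, hp1, hA, hB, rfl⟩ := h
  obtain ⟨i₀⟩ := ‹Nonempty α›
  obtain ⟨j₀⟩ := ‹Nonempty β›
  obtain ⟨a, ha, ha₀⟩ := exists_orthonormal_kronVec_single i₀ A hA
  obtain ⟨b, hb, hb₀⟩ := exists_orthonormal_kronVec_single j₀ B hB
  refine ⟨_, isCC_sum_smul_kronecker a b ha hb (fun s => (i₀, s)) (fun s => (j₀, s)) p hp hp1, ?_⟩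
  simp only [ptracePrimes_sum, ptracePrimes_smul, ha₀, hb₀]
  congr! with s
  exact ptracePrimes_kronecker_vecState_kronVec _ _ _ _ (by simp) (by simp)

end ClassicalExtension

lemma IsSepState.exists_ccExtension {α β δ : Type*} [Fintype α] [Fintype β] [Fintype δ]
    [DecidableEq α] [DecidableEq β] [DecidableEq δ] {ρ : Matrix (α × β) (α × β) ℂ}
    (h : IsSepState ρ) (hδ : (Fintype.card α * Fintype.card β) ^ 2 ≤ Fintype.card δ) :
    ∃ ρext : Matrix ((α × δ) × β × δ) ((α × δ) × β × δ) ℂ,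
      IsState ρext ∧ IsCC ρext ∧ ptracePrimes ρext = ρ := by
  obtain ⟨_, _⟩ := nonempty_and_nonempty_of_trace_eq_one h.isState.2
  obtain ⟨ρext, hcc, hρext⟩ := (h.hasSepDecomp_of_card_le hδ).exists_isCC_ptracePrimes_eq
  exact ⟨ρext, hcc.hasSepDecomp.isState, hcc, hρext⟩

theorem sep_iff_cc_extension_general
    (m n : ℕ) (ρAB : Matrix (Fin m × Fin n) (Fin m × Fin n) ℂ) :
    (IsSepState ρAB ↔ ∃ (d₁ d₂ : ℕ), 0 < d₁ ∧ 0 < d₂ ∧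
      ∃ ρext : Matrix ((Fin m × Fin d₁) × Fin n × Fin d₂)
          ((Fin m × Fin d₁) × Fin n × Fin d₂) ℂ,
        IsState ρext ∧ IsCC ρext ∧ ptracePrimes ρext = ρAB) ∧
    (IsSepState ρAB →
      ∃ ρext : Matrix ((Fin m × Fin (m ^ 2 * n ^ 2)) × Fin n × Fin (m ^ 2 * n ^ 2))
          ((Fin m × Fin (m ^ 2 * n ^ 2)) × Fin n × Fin (m ^ 2 * n ^ 2)) ℂ,
        IsState ρext ∧ IsCC ρext ∧ ptracePrimes ρext = ρAB) := by
  have extension (h : IsSepState ρAB) := h.exists_ccExtension (δ := Fin (m ^ 2 * n ^ 2))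
    (by simp [mul_pow])
  refine ⟨⟨fun h => ?_, ?_⟩, extension⟩
  · obtain ⟨hm, hn⟩ := nonempty_and_nonempty_of_trace_eq_one h.isState.2
    have hd : 0 < m ^ 2 * n ^ 2 := by
      have := Fin.pos_iff_nonempty.mpr hm
      have := Fin.pos_iff_nonempty.mpr hn
      positivity
    exact ⟨_, _, hd, hd, extension h⟩
  · rintro ⟨d₁, d₂, -, -, ρext, -, hcc, rfl⟩
    exact isSepState_ptracePrimes hcc.hasSepDecomp.isSepState

/-- A bipartite state is separable iff it has a classical-classical
extension (across the `(AA')|(BB')` cut); moreover, when separable such an extension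
exists with `d₁ = d₂ = m²n²`. -/
theorem sep_iff_cc_extension
    (m n : ℕ) (ρAB : Matrix (Fin m × Fin n) (Fin m × Fin n) ℂ) (hρ : IsState ρAB) :
    (IsSepState ρAB ↔ ∃ (d₁ d₂ : ℕ), 0 < d₁ ∧ 0 < d₂ ∧
      ∃ ρext : Matrix ((Fin m × Fin d₁) × Fin n × Fin d₂)
          ((Fin m × Fin d₁) × Fin n × Fin d₂) ℂ,
        IsState ρext ∧ IsCC ρext ∧ ptracePrimes ρext = ρAB) ∧
    (IsSepState ρAB →
      ∃ ρext : Matrix ((Fin m × Fin (m ^ 2 * n ^ 2)) × Fin n × Fin (m ^ 2 * n ^ 2))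
          ((Fin m × Fin (m ^ 2 * n ^ 2)) × Fin n × Fin (m ^ 2 * n ^ 2)) ℂ,
        IsState ρext ∧ IsCC ρext ∧ ptracePrimes ρext = ρAB) :=
  sep_iff_cc_extension_general m n ρAB
end

section
/- For every Hermitian (mn)×(mn) complex matrix M (indices identified with pairs (i,k), i∈Fin m, k∈Fin n), the trace norm does not increase under the partial trace over the second factor: ‖tr_B M‖₁ ≤ ‖M‖₁. -/
open scoped Kronecker ComplexOrder Matrix

/-!
For Hermitian `A`, `‖A‖₁ = ∑ |λᵢ|` is the maximum of `Re tr (C A)` over unitaries `C`: the bound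
holds because the diagonal entries of a unitary have modulus at most one, and it is attained at
`C = sign A`. Taking `C = Q ⊗ 1` with `Q = sign (tr_B M)`, which is unitary, and using
`tr ((Q ⊗ 1) M) = tr (Q tr_B M)` gives `‖tr_B M‖₁ = Re tr ((Q ⊗ 1) M) ≤ ‖M‖₁`.
-/

open Matrix

namespace Matrix.IsHermitian

variable {𝕜 n : Type*} [RCLike 𝕜] [Fintype n] [DecidableEq n] {A : Matrix n n 𝕜}

lemma trace_cfc (hA : A.IsHermitian) (f : ℝ → ℝ) :
    (cfc f A).trace = ∑ i, (f (hA.eigenvalues i) : 𝕜) := by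
  rw [hA.cfc_eq, IsHermitian.cfc, Unitary.conjStarAlgAut_apply, trace_mul_cycle,
    Unitary.coe_star_mul_self, one_mul, trace_diagonal]
  rfl

end Matrix.IsHermitian

section TraceNorm

variable {n : Type*} [Fintype n] [DecidableEq n] {A : Matrix n n ℂ}

lemma traceNorm_eq_sum_abs_eigenvalues (hA : A.IsHermitian) :
    traceNorm A = ∑ i, |hA.eigenvalues i| := by
  have hAA : (Aᴴ * A).IsHermitian := (posSemidef_conjTranspose_mul_self A).1
  have h : traceNorm A = (cfc Real.sqrt (Aᴴ * A)).trace.re := by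
    rw [hAA.cfc_eq]; rfl
  rw [h, hA.eq, ← pow_two, ← cfc_comp_pow Real.sqrt 2 A, hA.trace_cfc, Complex.re_sum]
  simp [Real.sqrt_sq_eq_abs]

lemma re_trace_mul_le_traceNorm (hA : A.IsHermitian) {C : Matrix n n ℂ}
    (hC : C ∈ unitaryGroup n ℂ) : (C * A).trace.re ≤ traceNorm A := by
  set U : Matrix n n ℂ := (hA.eigenvectorUnitary : Matrix n n ℂ)
  set V := star U * C * U
  have hU : U ∈ unitaryGroup n ℂ := hA.eigenvectorUnitary.2
  have hV : V ∈ unitaryGroup n ℂ := mul_mem (mul_mem (Unitary.star_mem hU) hC) hU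
  have htr : (C * A).trace = ∑ j, V j j * (hA.eigenvalues j : ℂ) := by
    conv_lhs => rw [hA.spectral_theorem, Unitary.conjStarAlgAut_apply, ← mul_assoc, ← mul_assoc,
      trace_mul_cycle, ← mul_assoc]
    simp only [trace, diag, mul_diagonal, V, Function.comp_apply]
    rfl
  rw [htr, Complex.re_sum, traceNorm_eq_sum_abs_eigenvalues hA]
  gcongr with j
  calc (V j j * (hA.eigenvalues j : ℂ)).re ≤ ‖V j j * (hA.eigenvalues j : ℂ)‖ :=
        Complex.re_le_norm _
    _ = ‖V j j‖ * |hA.eigenvalues j| := by rw [norm_mul, Complex.norm_real, Real.norm_eq_abs]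
    _ ≤ |hA.eigenvalues j| :=
        mul_le_of_le_one_left (abs_nonneg _) (entry_norm_bound_of_unitary hV j j)

lemma exists_unitary_re_trace_mul_eq_traceNorm (hA : A.IsHermitian) :
    ∃ Q ∈ unitaryGroup n ℂ, (Q * A).trace.re = traceNorm A := by
  let sign : ℝ → ℝ := fun x => if x < 0 then -1 else 1
  -- the spectrum is finite, so every function is continuous on it
  have hcont : ∀ f : ℝ → ℝ, ContinuousOn f (spectrum ℝ A) := fun f => by
    rw [continuousOn_iff_continuous_domRestrict]; fun_prop
  refine ⟨cfc sign A, ?_, ?_⟩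
  · rw [mem_unitaryGroup_iff', (cfc_predicate sign A).star_eq,
      ← cfc_mul sign sign A (hcont _) (hcont _)]
    convert cfc_one ℝ A using 2
    ext x; simp only [sign]; split_ifs <;> norm_num
  · have hmul : cfc sign A * A = cfc (fun x => sign x * x) A := by
      rw [cfc_mul sign (fun x => x) A (hcont _) (hcont _), cfc_id' ℝ A]
    rw [hmul, hA.trace_cfc, Complex.re_sum, traceNorm_eq_sum_abs_eigenvalues hA]
    refine Finset.sum_congr rfl fun i _ => ?_
    change sign (hA.eigenvalues i) * hA.eigenvalues i = _
    simp only [sign]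
    split_ifs with h
    · rw [abs_of_neg h]; ring
    · rw [abs_of_nonneg (not_lt.mp h)]; ring

end TraceNorm

section PartialTrace

variable {α β : Type*} [Fintype β]

lemma isHermitian_ptrace2 {M : Matrix (α × β) (α × β) ℂ} (hM : M.IsHermitian) :
    (ptrace2 M).IsHermitian := by
  ext i i'
  simp only [conjTranspose_apply, ptrace2, star_sum]
  exact Finset.sum_congr rfl fun k _ => congrFun (congrFun hM (i, k)) (i', k)

lemma trace_kronecker_one_mul [Fintype α] [DecidableEq β] (Q : Matrix α α ℂ)
    (M : Matrix (α × β) (α × β) ℂ) :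
    ((Q ⊗ₖ (1 : Matrix β β ℂ)) * M).trace = (Q * ptrace2 M).trace := by
  simp only [trace, diag, mul_apply, kroneckerMap_apply, one_apply, Fintype.sum_prod_type,
    mul_ite, mul_one, mul_zero, ite_mul, zero_mul, Finset.sum_ite_eq, Finset.mem_univ, if_true,
    ptrace2, Finset.mul_sum]
  exact Finset.sum_congr rfl fun i _ => Finset.sum_comm

end PartialTrace

/-- The trace norm does not increase under the partial trace over
the second factor: `‖tr_B M‖₁ ≤ ‖M‖₁` for Hermitian `M`. -/
theorem traceNorm_ptrace2_le (m n : ℕ)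
    (M : Matrix (Fin m × Fin n) (Fin m × Fin n) ℂ) (hM : M.IsHermitian) :
    traceNorm (ptrace2 M) ≤ traceNorm M := by
  obtain ⟨Q, hQ, hQM⟩ := exists_unitary_re_trace_mul_eq_traceNorm (isHermitian_ptrace2 hM)
  calc traceNorm (ptrace2 M) = ((Q ⊗ₖ (1 : Matrix (Fin n) (Fin n) ℂ)) * M).trace.re := by
        rw [trace_kronecker_one_mul, hQM]
    _ ≤ traceNorm M := re_trace_mul_le_traceNorm hM (kronecker_mem_unitary hQ (one_mem _))
end
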